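/- arXiv:2506.19195 — 6 statements merged into one kernel-verified Lean document; each statement's English description precedes it below -/
import Mathlib

section
/- Let K be the subgroup of F = F(a,b) × F(c,d) generated by the six elements ba⁻¹, ca⁻¹, da⁻¹, cb⁻¹, db⁻¹, dc⁻¹. Then K is a normal subgroup of F. -/
/-- `F₂`, the free group on two generators. -/
abbrev F2 : Type := FreeGroup (Fin 2)

/-- `a`, a free generator of the first factor of `F₂ × F₂`. -/
def a : F2 × F2 := (FreeGroup.of 0, 1)
/-- `b`, a free generator of the first factor of `F₂ × F₂`. -/
def b : F2 × F2 := (FreeGroup.of 1, 1)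
/-- `c`, a free generator of the second factor of `F₂ × F₂`. -/
def c : F2 × F2 := (1, FreeGroup.of 0)
/-- `d`, a free generator of the second factor of `F₂ × F₂`. -/
def d : F2 × F2 := (1, FreeGroup.of 1)

/-!
The six generators are the quotients `t * u⁻¹` of the generators `a, b, c, d`, so they generate
the same subgroup `K` as `b a⁻¹, c a⁻¹, d a⁻¹`. Conjugation by `a` fixes `c a⁻¹` and `d a⁻¹` (the
factors commute), and since `a = (c a⁻¹)⁻¹ c` with `c` commuting with `b a⁻¹`, it sends `b a⁻¹` to
`(c a⁻¹)⁻¹ (b a⁻¹) (c a⁻¹)`; similarly for `a⁻¹`, so `a` normalizes `K`. The normalizer of `K`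
then contains `K` and `a`, hence `b, c, d ∈ K a`, hence the whole group.
-/

open Subgroup

namespace Subgroup

variable {G : Type*} [Group G]

theorem mem_normalizer_closure_of_conj_mem {S : Set G} {g : G}
    (hg : ∀ s ∈ S, g * s * g⁻¹ ∈ closure S) (hg' : ∀ s ∈ S, g⁻¹ * s * g ∈ closure S) :
    g ∈ normalizer (closure S : Set G) := by
  have conj_mem {g : G} (hg : ∀ s ∈ S, g * s * g⁻¹ ∈ closure S) {x : G} (hx : x ∈ closure S) :
      g * x * g⁻¹ ∈ closure S :=
    (closure_le ((closure S).comap (MulAut.conj g).toMonoidHom)).2 hg hx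
  refine mem_normalizer_iff.2 fun x => ⟨conj_mem hg, fun hx => ?_⟩
  simpa [mul_assoc] using conj_mem (g := g⁻¹) (by simpa using hg') hx

theorem closure_mul_inv_pairs_eq (g₀ g₁ g₂ g₃ : G) :
    closure {g₁ * g₀⁻¹, g₂ * g₀⁻¹, g₃ * g₀⁻¹, g₂ * g₁⁻¹, g₃ * g₁⁻¹, g₃ * g₂⁻¹} =
      closure {g₁ * g₀⁻¹, g₂ * g₀⁻¹, g₃ * g₀⁻¹} := by
  set K := closure {g₁ * g₀⁻¹, g₂ * g₀⁻¹, g₃ * g₀⁻¹}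
  have h₁ : g₁ * g₀⁻¹ ∈ K := subset_closure (by simp)
  have h₂ : g₂ * g₀⁻¹ ∈ K := subset_closure (by simp)
  have h₃ : g₃ * g₀⁻¹ ∈ K := subset_closure (by simp)
  have mul_inv_mem {x y : G} (hx : x * g₀⁻¹ ∈ K) (hy : y * g₀⁻¹ ∈ K) : x * y⁻¹ ∈ K := by
    simpa [mul_assoc] using mul_mem hx (inv_mem hy)
  refine le_antisymm ((closure_le K).2 ?_) (closure_mono ?_)
  · simp only [Set.insert_subset_iff, Set.singleton_subset_iff, SetLike.mem_coe]
    exact ⟨h₁, h₂, h₃, mul_inv_mem h₂ h₁, mul_inv_mem h₃ h₁, mul_inv_mem h₃ h₂⟩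
  · simp [Set.insert_subset_iff]

end Subgroup

theorem FreeGroup.subgroup_prod_eq_top_of_of_mem {α β : Type*}
    {H : Subgroup (FreeGroup α × FreeGroup β)}
    (hl : ∀ i, (FreeGroup.of i, 1) ∈ H) (hr : ∀ j, (1, FreeGroup.of j) ∈ H) : H = ⊤ := by
  rw [eq_top_iff, ← top_prod_top, prod_le_iff, ← FreeGroup.closure_range_of,
    ← FreeGroup.closure_range_of, MonoidHom.map_closure, MonoidHom.map_closure, closure_le,
    closure_le, ← Set.range_comp, ← Set.range_comp, Set.range_subset_iff, Set.range_subset_iff]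
  exact ⟨hl, hr⟩

theorem conj_a_mul_inv : a * (b * a⁻¹) * a⁻¹ = (c * a⁻¹)⁻¹ * (b * a⁻¹) * (c * a⁻¹) := by
  ext <;> simp [a, b, c]

theorem conj_inv_a_mul_inv : a⁻¹ * (b * a⁻¹) * a = (c * a⁻¹) * (b * a⁻¹) * (c * a⁻¹)⁻¹ := by
  ext <;> simp [a, b, c]

theorem commute_a_c_mul_inv : Commute a (c * a⁻¹) := by
  ext <;> simp [a, c]

theorem commute_a_d_mul_inv : Commute a (d * a⁻¹) := by
  ext <;> simp [a, d]

theorem a_mem_normalizer :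
    a ∈ normalizer (closure ({b * a⁻¹, c * a⁻¹, d * a⁻¹} : Set (F2 × F2)) : Set (F2 × F2)) := by
  set K := closure ({b * a⁻¹, c * a⁻¹, d * a⁻¹} : Set (F2 × F2))
  have hb : b * a⁻¹ ∈ K := subset_closure (by simp)
  have hc : c * a⁻¹ ∈ K := subset_closure (by simp)
  have hd : d * a⁻¹ ∈ K := subset_closure (by simp)
  apply mem_normalizer_closure_of_conj_mem
  · rintro s (rfl | rfl | rfl)
    · rw [conj_a_mul_inv]
      exact mul_mem (mul_mem (inv_mem hc) hb) hc
    · rwa [commute_a_c_mul_inv.mul_inv_cancel]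
    · rwa [commute_a_d_mul_inv.mul_inv_cancel]
  · rintro s (rfl | rfl | rfl)
    · rw [conj_inv_a_mul_inv]
      exact mul_mem (mul_mem hc hb) (inv_mem hc)
    · rwa [commute_a_c_mul_inv.inv_mul_cancel]
    · rwa [commute_a_d_mul_inv.inv_mul_cancel]

/-- The subgroup of `F = F(a,b) × F(c,d)` generated by the six elements
`ba⁻¹, ca⁻¹, da⁻¹, cb⁻¹, db⁻¹, dc⁻¹` is normal in `F`. -/
theorem stmt_0 :
    (Subgroup.closure
      ({b * a⁻¹, c * a⁻¹, d * a⁻¹, c * b⁻¹, d * b⁻¹, d * c⁻¹} : Set (F2 × F2))).Normal := by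
  rw [closure_mul_inv_pairs_eq, ← normalizer_eq_top_iff]
  set K := closure ({b * a⁻¹, c * a⁻¹, d * a⁻¹} : Set (F2 × F2))
  have mem_of_mul_inv_mem {t : F2 × F2} (ht : t * a⁻¹ ∈ K) :
      t ∈ normalizer (K : Set (F2 × F2)) := by
    simpa using mul_mem (le_normalizer ht) a_mem_normalizer
  apply FreeGroup.subgroup_prod_eq_top_of_of_mem <;> intro i <;> fin_cases i
  · exact a_mem_normalizer
  · exact mem_of_mul_inv_mem (t := b) (subset_closure (by simp))
  · exact mem_of_mul_inv_mem (t := c) (subset_closure (by simp))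
  · exact mem_of_mul_inv_mem (t := d) (subset_closure (by simp))
end

section
/- Let φ : F → ℤ be the homomorphism sending each of a, b, c, d to 1 (the total exponent sum). Then the subgroup of F generated by the six elements ba⁻¹, ca⁻¹, da⁻¹, cb⁻¹, db⁻¹, dc⁻¹ equals ker φ; in particular this subgroup consists exactly of the elements of F with zero total exponent sum. -/
/-! Write `H` for the subgroup generated by the six quotients. It is already generated by
`b * a⁻¹`, `c * a⁻¹`, `d * a⁻¹`, and `a` normalizes it: `a` commutes with `c * a⁻¹` and `d * a⁻¹`,
and since `a = (c * a⁻¹)⁻¹ * c` with `c` commuting with `b * a⁻¹`, conjugation by `a` acts on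
`b * a⁻¹` as conjugation by `(c * a⁻¹)⁻¹`. So `H * ⟨a⟩` is a subgroup; it contains `a, b, c, d`,
hence every element of `F` is `h * a ^ n` with `h ∈ H`, and it lies in `ker φ` only if `n = 0`. -/

open Subgroup

namespace Subgroup

variable {G N : Type*} [Group G] [Group N]

theorem mem_normalizer_closure_of_conj_mem_s1 {s : Set G} {x : G}
    (hconj : ∀ g ∈ s, x * g * x⁻¹ ∈ closure s) (hconj' : ∀ g ∈ s, x⁻¹ * g * x ∈ closure s) :
    x ∈ normalizer (closure s : Set G) := by
  rw [mem_normalizer_iff_map_conj_eq]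
  refine le_antisymm ?_ ?_
  · rw [MonoidHom.map_closure, closure_le]
    rintro _ ⟨g, hg, rfl⟩
    exact hconj g hg
  · rw [closure_le]
    intro g hg
    exact ⟨x⁻¹ * g * x, hconj' g hg, by simp [mul_assoc]⟩

theorem closure_image_inl_union_image_inr (s : Set G) (t : Set N) :
    closure (MonoidHom.inl G N '' s ∪ MonoidHom.inr G N '' t) = (closure s).prod (closure t) := by
  refine le_antisymm ?_ ?_
  · rw [closure_le]
    rintro _ (⟨g, hg, rfl⟩ | ⟨n, hn, rfl⟩)
    · exact ⟨subset_closure hg, one_mem _⟩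
    · exact ⟨one_mem _, subset_closure hn⟩
  · rw [prod_le_iff, MonoidHom.map_closure, MonoidHom.map_closure]
    exact ⟨closure_mono Set.subset_union_left, closure_mono Set.subset_union_right⟩

theorem eq_ker_of_sup_zpowers_eq_top {M : Type*} [Group M] {φ : G →* M} {H : Subgroup G}
    {x : G} (hφx : ¬IsOfFinOrder (φ x)) (hxH : x ∈ normalizer (H : Set G))
    (hsup : H ⊔ zpowers x = ⊤) (hH : H ≤ φ.ker) : H = φ.ker := by
  refine le_antisymm hH fun g hg => ?_
  have hg' : g ∈ ((H ⊔ zpowers x : Subgroup G) : Set G) := by simp [hsup]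
  rw [coe_mul_of_right_le_normalizer_left H _ ((zpowers_le (H := normalizer _)).mpr hxH)] at hg'
  obtain ⟨h, hh, _, ⟨n, rfl⟩, rfl⟩ := hg'
  have hn : φ x ^ n = φ x ^ (0 : ℤ) := by
    simpa [MonoidHom.mem_ker.mp (hH hh)] using MonoidHom.mem_ker.mp hg
  obtain rfl : n = 0 := injective_zpow_iff_not_isOfFinOrder.mpr hφx hn
  simpa using hh

end Subgroup

theorem closure_mul_inv_pairs_eq_closure_mul_inv_a :
    closure ({b * a⁻¹, c * a⁻¹, d * a⁻¹, c * b⁻¹, d * b⁻¹, d * c⁻¹} : Set (F2 × F2)) =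
      closure {b * a⁻¹, c * a⁻¹, d * a⁻¹} := by
  refine le_antisymm ?_ (closure_mono fun g hg => by rcases hg with rfl | rfl | rfl <;> simp)
  set H := closure ({b * a⁻¹, c * a⁻¹, d * a⁻¹} : Set (F2 × F2))
  have hp : b * a⁻¹ ∈ H := subset_closure (by simp)
  have hu : c * a⁻¹ ∈ H := subset_closure (by simp)
  have hv : d * a⁻¹ ∈ H := subset_closure (by simp)
  rw [closure_le]
  rintro g (rfl | rfl | rfl | rfl | rfl | rfl)
  · exact hp
  · exact hu
  · exact hv
  · simpa [mul_assoc] using mul_mem hu (inv_mem hp)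
  · simpa [mul_assoc] using mul_mem hv (inv_mem hp)
  · simpa [mul_assoc] using mul_mem hv (inv_mem hu)

theorem commute_a_c : Commute a c := by ext <;> simp [a, c]

theorem commute_a_d : Commute a d := by ext <;> simp [a, d]

theorem a_mem_normalizer_closure :
    a ∈ normalizer (closure {b * a⁻¹, c * a⁻¹, d * a⁻¹} : Set (F2 × F2)) := by
  set H := closure ({b * a⁻¹, c * a⁻¹, d * a⁻¹} : Set (F2 × F2))
  have hp : b * a⁻¹ ∈ H := subset_closure (by simp)
  have hu : c * a⁻¹ ∈ H := subset_closure (by simp)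
  have hv : d * a⁻¹ ∈ H := subset_closure (by simp)
  have hau : Commute a (c * a⁻¹) := commute_a_c.mul_right (Commute.refl a).inv_right
  have hav : Commute a (d * a⁻¹) := commute_a_d.mul_right (Commute.refl a).inv_right
  have hap : a * (b * a⁻¹) * a⁻¹ = (c * a⁻¹)⁻¹ * (b * a⁻¹) * (c * a⁻¹) := by
    ext <;> simp [a, b, c]
  have hap' : a⁻¹ * (b * a⁻¹) * a = (c * a⁻¹) * (b * a⁻¹) * (c * a⁻¹)⁻¹ := by
    ext <;> simp [a, b, c]
  refine mem_normalizer_closure_of_conj_mem_s1 ?_ ?_ <;> rintro g (rfl | rfl | rfl)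
  · exact hap ▸ mul_mem (mul_mem (inv_mem hu) hp) hu
  · rwa [hau.mul_inv_cancel]
  · rwa [hav.mul_inv_cancel]
  · exact hap' ▸ mul_mem (mul_mem hu hp) (inv_mem hu)
  · rwa [mul_assoc, ← hau.eq, inv_mul_cancel_left]
  · rwa [mul_assoc, ← hav.eq, inv_mul_cancel_left]

theorem closure_sup_zpowers_a_eq_top :
    closure ({b * a⁻¹, c * a⁻¹, d * a⁻¹} : Set (F2 × F2)) ⊔ zpowers a = ⊤ := by
  set H := closure ({b * a⁻¹, c * a⁻¹, d * a⁻¹} : Set (F2 × F2))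
  have ha : a ∈ H ⊔ zpowers a := mem_sup_right (mem_zpowers a)
  have hgen {g : F2 × F2} (hg : g * a⁻¹ ∈ H) : g ∈ H ⊔ zpowers a := by
    simpa using mul_mem (mem_sup_left hg) ha
  rw [eq_top_iff, ← top_prod_top, ← FreeGroup.closure_range_of,
    ← closure_image_inl_union_image_inr, closure_le]
  rintro _ (⟨_, ⟨i, rfl⟩, rfl⟩ | ⟨_, ⟨i, rfl⟩, rfl⟩) <;> fin_cases i
  · exact ha
  · exact hgen (g := b) (subset_closure (by simp))
  · exact hgen (g := c) (subset_closure (by simp))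
  · exact hgen (g := d) (subset_closure (by simp))

/-- If `φ : F(a,b) × F(c,d) → ℤ` is the homomorphism sending each of `a, b, c, d` to `1`
(the total exponent sum), then the subgroup generated by the six elements
`ba⁻¹, ca⁻¹, da⁻¹, cb⁻¹, db⁻¹, dc⁻¹` equals `ker φ`. -/
theorem stmt_1 (φ : F2 × F2 →* Multiplicative ℤ)
    (ha : φ a = Multiplicative.ofAdd 1) (hb : φ b = Multiplicative.ofAdd 1)
    (hc : φ c = Multiplicative.ofAdd 1) (hd : φ d = Multiplicative.ofAdd 1) :
    Subgroup.closure
      ({b * a⁻¹, c * a⁻¹, d * a⁻¹, c * b⁻¹, d * b⁻¹, d * c⁻¹} : Set (F2 × F2)) = φ.ker := by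
  rw [closure_mul_inv_pairs_eq_closure_mul_inv_a]
  refine eq_ker_of_sup_zpowers_eq_top ?_ a_mem_normalizer_closure closure_sup_zpowers_a_eq_top ?_
  · exact ha ▸ not_isOfFinOrder_of_isMulTorsionFree (by decide)
  · rw [closure_le]
    rintro _ (rfl | rfl | rfl) <;> simp [ha, hb, hc, hd]
end

section
/- The kernel K = ker φ is a finitely generated group. -/
/-!
If `φ` sends every generator `s` of a group to `1 ∈ ℤ`, then by induction on `g` every element
`t ^ k * g * t ^ (-(k + φ g))` lies in the subgroup generated by the `t ^ k * s * t ^ (-(k + 1))`,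
so these elements generate `ker φ`. Take `t = c`: for `s = a, b, c` they are `a c⁻¹`, `b c⁻¹`, `1`,
and for `s = d` the conjugate `c ^ k (d c⁻¹) c ^ (-k)`. Since `a` commutes with the second factor,
conjugating it by `c ^ k` is the same as conjugating by `(c a⁻¹) ^ k`, so the kernel is generated by
`a c⁻¹`, `b c⁻¹`, `d c⁻¹`.
-/

open Subgroup

theorem Subgroup.closure_image_inl_union_image_inr_eq_top {G N : Type*} [Group G] [Group N]
    {s : Set G} {t : Set N} (hs : closure s = ⊤) (ht : closure t = ⊤) :
    closure (MonoidHom.inl G N '' s ∪ MonoidHom.inr G N '' t) = ⊤ := by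
  rw [closure_union, ← MonoidHom.map_closure, ← MonoidHom.map_closure, hs, ht, eq_top_iff,
    ← top_prod_top, prod_le_iff]
  exact ⟨le_sup_left, le_sup_right⟩

theorem MonoidHom.ker_le_of_zpow_mul_mul_zpow_mem {G : Type*} [Group G]
    (φ : G →* Multiplicative ℤ) {S : Set G} (hS : closure S = ⊤) (H : Subgroup G) (t : G)
    (hH : ∀ s ∈ S, ∀ k : ℤ, t ^ k * s * t ^ (-(k + (φ s).toAdd)) ∈ H) : φ.ker ≤ H := by
  have key : ∀ g : G, ∀ k : ℤ, t ^ k * g * t ^ (-(k + (φ g).toAdd)) ∈ H := by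
    intro g
    induction hS ▸ mem_top g using closure_induction'' with
    | mem s hs => exact hH s hs
    | inv_mem s hs =>
      intro k
      convert H.inv_mem (hH s hs (k - (φ s).toAdd)) using 1
      simp only [map_inv, toAdd_inv]
      group
    | one => intro k; simp
    | mul x y _ _ hx hy =>
      intro k
      convert H.mul_mem (hx k) (hy (k + (φ x).toAdd)) using 1
      simp only [map_mul, toAdd_mul]
      group
  intro g hg
  simpa [(mem_ker).1 hg] using key g 0

theorem c_zpow_mul_a_mul_c_zpow (k : ℤ) : c ^ k * a * c ^ (-(k + 1)) = a * c⁻¹ := by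
  simp [Prod.ext_iff, a, c]; group

theorem c_zpow_mul_b_mul_c_zpow (k : ℤ) : c ^ k * b * c ^ (-(k + 1)) = b * c⁻¹ := by
  simp [Prod.ext_iff, b, c]; group

theorem c_zpow_mul_c_mul_c_zpow (k : ℤ) : c ^ k * c * c ^ (-(k + 1)) = 1 := by
  group

theorem c_zpow_mul_d_mul_c_zpow (k : ℤ) :
    c ^ k * d * c ^ (-(k + 1)) = (a * c⁻¹) ^ (-k) * (d * c⁻¹) * ((a * c⁻¹) ^ (-k))⁻¹ := by
  simp [Prod.ext_iff, a, c, d]; group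

theorem ker_eq_closure (φ : F2 × F2 →* Multiplicative ℤ)
    (ha : φ a = Multiplicative.ofAdd 1) (hb : φ b = Multiplicative.ofAdd 1)
    (hc : φ c = Multiplicative.ofAdd 1) (hd : φ d = Multiplicative.ofAdd 1) :
    φ.ker = closure {a * c⁻¹, b * c⁻¹, d * c⁻¹} := by
  set H : Subgroup (F2 × F2) := closure {a * c⁻¹, b * c⁻¹, d * c⁻¹}
  have hac : a * c⁻¹ ∈ H := subset_closure (by simp)
  have hbc : b * c⁻¹ ∈ H := subset_closure (by simp)
  have hdc : d * c⁻¹ ∈ H := subset_closure (by simp)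
  refine le_antisymm (φ.ker_le_of_zpow_mul_mul_zpow_mem
    (closure_image_inl_union_image_inr_eq_top (FreeGroup.closure_range_of _)
      (FreeGroup.closure_range_of _)) H c ?_) ?_
  · rintro _ (⟨_, ⟨i, rfl⟩, rfl⟩ | ⟨_, ⟨i, rfl⟩, rfl⟩) k <;> fin_cases i
    · change c ^ k * a * c ^ (-(k + (φ a).toAdd)) ∈ H
      rwa [ha, toAdd_ofAdd, c_zpow_mul_a_mul_c_zpow]
    · change c ^ k * b * c ^ (-(k + (φ b).toAdd)) ∈ H
      rwa [hb, toAdd_ofAdd, c_zpow_mul_b_mul_c_zpow]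
    · change c ^ k * c * c ^ (-(k + (φ c).toAdd)) ∈ H
      rw [hc, toAdd_ofAdd, c_zpow_mul_c_mul_c_zpow]
      exact H.one_mem
    · change c ^ k * d * c ^ (-(k + (φ d).toAdd)) ∈ H
      rw [hd, toAdd_ofAdd, c_zpow_mul_d_mul_c_zpow]
      exact H.mul_mem (H.mul_mem (H.zpow_mem hac _) hdc) (H.inv_mem (H.zpow_mem hac _))
  · rw [closure_le]
    rintro _ (rfl | rfl | rfl) <;> simp [ha, hb, hc, hd]

/-- `K = ker φ` is a finitely generated group. -/
theorem stmt_4 (φ : F2 × F2 →* Multiplicative ℤ)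
    (ha : φ a = Multiplicative.ofAdd 1) (hb : φ b = Multiplicative.ofAdd 1)
    (hc : φ c = Multiplicative.ofAdd 1) (hd : φ d = Multiplicative.ofAdd 1) :
    Group.FG φ.ker := by
  rw [Group.fg_iff_subgroup_fg, Subgroup.fg_iff]
  exact ⟨_, (ker_eq_closure φ ha hb hc hd).symm, Set.toFinite _⟩
end

section
/- The group K = ker φ is one-ended: the Cayley graph of K with respect to the generating set T = {ba⁻¹, dc⁻¹, da⁻¹} has exactly one end, i.e., its space of ends is nonempty and any two ends are equal. -/
/-- The Cayley graph of `K = ker φ` with respect to `T = {ba⁻¹, dc⁻¹, da⁻¹}`: distinct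
vertices `x, y` are adjacent iff `x⁻¹y ∈ T` or `y⁻¹x ∈ T`. -/
def cayleyK (φ : F2 × F2 →* Multiplicative ℤ) : SimpleGraph φ.ker :=
  SimpleGraph.fromRel fun x y =>
    (x : F2 × F2)⁻¹ * (y : F2 × F2) ∈ ({b * a⁻¹, d * c⁻¹, d * a⁻¹} : Set (F2 × F2))

open Multiplicative

lemma notMem_of_forall_le_of_lt {H : Type*} {S : Set H} {σ : H → Multiplicative ℤ} {N : ℤ}
    (hS : ∀ s ∈ S, toAdd (σ s) ≤ N) {x : H} (hx : N < toAdd (σ x)) : x ∉ S :=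
  fun h => (hS x h).not_gt hx

namespace SimpleGraph

variable {V : Type*} (G : SimpleGraph V) (S : Set V)

def ReachableAvoiding (x y : V) : Prop :=
  ∃ (hx : x ∉ S) (hy : y ∉ S), (G.induce Sᶜ).Reachable ⟨x, hx⟩ ⟨y, hy⟩

variable {G S} {x y z : V}

lemma ReachableAvoiding.refl (hx : x ∉ S) : G.ReachableAvoiding S x x :=
  ⟨hx, hx, .rfl⟩

lemma ReachableAvoiding.trans (hxy : G.ReachableAvoiding S x y)
    (hyz : G.ReachableAvoiding S y z) : G.ReachableAvoiding S x z :=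
  let ⟨hx, _, hxy⟩ := hxy
  let ⟨_, hz, hyz⟩ := hyz
  ⟨hx, hz, hxy.trans hyz⟩

lemma Adj.reachableAvoiding (h : G.Adj x y) (hx : x ∉ S) (hy : y ∉ S) :
    G.ReachableAvoiding S x y :=
  ⟨hx, hy, Adj.reachable (G := G.induce Sᶜ) h⟩

lemma ReachableAvoiding.reachable (h : G.ReachableAvoiding S x y) : G.Reachable x y :=
  let ⟨_, _, h⟩ := h
  h.map (Embedding.induce Sᶜ).toHom

lemma ReachableAvoiding.componentComplMk_eq (h : G.ReachableAvoiding S x y) (hx : x ∉ S)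
    (hy : y ∉ S) : G.componentComplMk hx = G.componentComplMk hy :=
  let ⟨_, _, h⟩ := h
  ConnectedComponent.sound h

variable {H : Type*} [Group H]

lemma mulCayley_adj_mul {s : Set H} {g : H} (hg : g ∈ s) (hg₁ : g ≠ 1) (x : H) :
    (mulCayley s).Adj x (x * g) :=
  (mulCayley_adj s _ _).mpr ⟨by simpa using hg₁, .inl (by simpa using hg)⟩

lemma adj_mul_inv {G : SimpleGraph H} {g : H} (hg : ∀ x, G.Adj x (x * g)) (x : H) :
    G.Adj x (x * g⁻¹) := by
  simpa using (hg (x * g⁻¹)).symm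

lemma finite_neighborSet_mulCayley {s : Set H} (hs : s.Finite) (x : H) :
    ((mulCayley s).neighborSet x).Finite := by
  refine ((hs.union hs.inv).image (x * ·)).subset fun y hy => ?_
  rw [mem_neighborSet, mulCayley_adj] at hy
  refine ⟨x⁻¹ * y, ?_, by simp⟩
  rcases hy.2 with h | h
  · exact .inl h
  · exact .inr (by simpa using h)

variable {G : SimpleGraph H} {S : Set H}

lemma reachableAvoiding_mul_zpow {g x : H} (hg : ∀ y, G.Adj y (y * g))
    (hx : ∀ k : ℤ, x * g ^ k ∉ S) (n : ℤ) : G.ReachableAvoiding S x (x * g ^ n) := by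
  induction n using Int.induction_on with
  | zero => simpa using ReachableAvoiding.refl (by simpa using hx 0)
  | succ k ih =>
    refine ih.trans (Adj.reachableAvoiding ?_ (hx k) (hx (k + 1)))
    simpa [zpow_add, mul_assoc] using hg (x * g ^ (k : ℤ))
  | pred k ih =>
    refine ih.trans (Adj.reachableAvoiding ?_ (hx (-k)) (hx (-k - 1)))
    simpa [zpow_sub, mul_assoc] using adj_mul_inv hg (x * g ^ (-(k : ℤ)))

variable (G S) (σ : H →* Multiplicative ℤ) (N : ℤ)

def Traversable (r : ℕ) (g : H) : Prop :=
  -(r : ℤ) ≤ toAdd (σ g) ∧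
    ∀ x, N + r < toAdd (σ x) → G.ReachableAvoiding S x (x * g)

variable {G S σ N}

lemma traversable_one (hS : ∀ s ∈ S, toAdd (σ s) ≤ N) : Traversable G S σ N 0 1 :=
  ⟨by simp, fun x hx => by
    simpa using ReachableAvoiding.refl (notMem_of_forall_le_of_lt hS (by simpa using hx))⟩

lemma traversable_of_adj (hS : ∀ s ∈ S, toAdd (σ s) ≤ N) {g : H} {r : ℕ}
    (hg : ∀ x, G.Adj x (x * g)) (hσ : -(r : ℤ) ≤ toAdd (σ g)) :
    Traversable G S σ N r g := by
  refine ⟨hσ, fun x hx => (hg x).reachableAvoiding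
    (notMem_of_forall_le_of_lt hS ?_) (notMem_of_forall_le_of_lt hS ?_)⟩
  · omega
  · simp only [map_mul, toAdd_mul]; omega

lemma Traversable.mul {g₁ g₂ : H} {r₁ r₂ : ℕ} (h₁ : Traversable G S σ N r₁ g₁)
    (h₂ : Traversable G S σ N r₂ g₂) : Traversable G S σ N (r₁ + r₂) (g₁ * g₂) := by
  have hσ₁ := h₁.1
  have hσ₂ := h₂.1
  refine ⟨by simp only [map_mul, toAdd_mul]; omega, fun x hx => ?_⟩
  have hx₁ : N + r₂ < toAdd (σ (x * g₁)) := by simp only [map_mul, toAdd_mul]; omega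
  simpa [mul_assoc] using (h₁.2 x (by omega)).trans (h₂.2 _ hx₁)

end SimpleGraph

namespace ExpSumKernel

open FreeGroup SimpleGraph

def expSum : F2 →* Multiplicative ℤ := FreeGroup.lift fun _ => ofAdd 1

def expDiff : F2 →* Multiplicative ℤ := FreeGroup.lift ![ofAdd (-1), ofAdd 1]

def totalExpSum : F2 × F2 →* Multiplicative ℤ := expSum.coprod expSum

lemma eq_totalExpSum {φ : F2 × F2 →* Multiplicative ℤ} (ha : φ a = ofAdd 1)
    (hb : φ b = ofAdd 1) (hc : φ c = ofAdd 1) (hd : φ d = ofAdd 1) : φ = totalExpSum := by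
  rw [← φ.coprod_unique, totalExpSum]
  congr 1 <;> refine FreeGroup.ext_hom _ _ fun i => ?_ <;> fin_cases i
  · simpa [expSum, a] using ha
  · simpa [expSum, b] using hb
  · simpa [expSum, c] using hc
  · simpa [expSum, d] using hd

abbrev K : Subgroup (F2 × F2) := totalExpSum.ker

lemma expSum_fst_mul_snd (x : K) : expSum (x : F2 × F2).1 * expSum (x : F2 × F2).2 = 1 := x.2

def w₀ : F2 := of 1 * (of 0)⁻¹

def p : K := ⟨(w₀, 1), by simp [w₀, totalExpSum, expSum]⟩
def q : K := ⟨(1, w₀), by simp [w₀, totalExpSum, expSum]⟩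
def t : K := ⟨((of 0)⁻¹, of 1), by simp [totalExpSum, expSum]⟩

@[simp] lemma coe_p : (p : F2 × F2) = (w₀, 1) := rfl
@[simp] lemma coe_q : (q : F2 × F2) = (1, w₀) := rfl
@[simp] lemma coe_t : (t : F2 × F2) = ((of 0)⁻¹, of 1) := rfl

def gens : Set K := Subtype.val ⁻¹' {b * a⁻¹, d * c⁻¹, d * a⁻¹}

lemma cayleyK_totalExpSum : cayleyK totalExpSum = mulCayley gens := by
  ext x y
  simp [cayleyK, mulCayley_adj, gens]

lemma finite_gens : gens.Finite :=
  (Set.toFinite _).preimage Subtype.val_injective.injOn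

def fstHeight : K →* Multiplicative ℤ := expDiff.comp ((MonoidHom.fst F2 F2).comp K.subtype)
def sndHeight : K →* Multiplicative ℤ := expDiff.comp ((MonoidHom.snd F2 F2).comp K.subtype)

lemma fstHeight_apply (x : K) : fstHeight x = expDiff (x : F2 × F2).1 := rfl
lemma sndHeight_apply (x : K) : sndHeight x = expDiff (x : F2 × F2).2 := rfl

@[simp] lemma expDiff_of_zero : expDiff (of 0) = ofAdd (-1) := by simp [expDiff]
@[simp] lemma expDiff_of_one : expDiff (of 1) = ofAdd 1 := by simp [expDiff]
@[simp] lemma expDiff_w₀ : expDiff w₀ = ofAdd 2 := by simp [w₀, ← ofAdd_neg, ← ofAdd_add]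

@[simp] lemma fstHeight_p : fstHeight p = ofAdd 2 := by simp [fstHeight_apply]
@[simp] lemma fstHeight_q : fstHeight q = 1 := by simp [fstHeight_apply]
@[simp] lemma fstHeight_t : fstHeight t = ofAdd 1 := by simp [fstHeight_apply]
@[simp] lemma sndHeight_p : sndHeight p = 1 := by simp [sndHeight_apply]
@[simp] lemma sndHeight_q : sndHeight q = ofAdd 2 := by simp [sndHeight_apply]
@[simp] lemma sndHeight_t : sndHeight t = ofAdd 1 := by simp [sndHeight_apply]

lemma adj_mul_p (x : K) : (mulCayley gens).Adj x (x * p) := by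
  refine mulCayley_adj_mul ?_ (fun h => by simpa using congrArg fstHeight h) x
  simp [gens, a, b, w₀]

lemma adj_mul_q (x : K) : (mulCayley gens).Adj x (x * q) := by
  refine mulCayley_adj_mul ?_ (fun h => by simpa using congrArg sndHeight h) x
  simp [gens, c, d, w₀]

lemma adj_mul_t (x : K) : (mulCayley gens).Adj x (x * t) := by
  refine mulCayley_adj_mul ?_ (fun h => by simpa using congrArg sndHeight h) x
  simp [gens, a, d]

section Transport

variable {S : Set K} {N : ℕ}

lemma exists_traversable_fst (hS : ∀ s ∈ S, toAdd (sndHeight s) ≤ N) (w : F2) :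
    ∃ (r : ℕ) (g : K) (j : ℤ), (g : F2 × F2) = (w, of 1 ^ j) ∧
      Traversable (mulCayley gens) S sndHeight N r g := by
  have hp := traversable_of_adj (r := 0) hS adj_mul_p (by simp)
  have ht := traversable_of_adj (r := 0) hS adj_mul_t (by simp)
  have ht' := traversable_of_adj (r := 1) hS (adj_mul_inv adj_mul_t) (by simp)
  have hp' := traversable_of_adj (r := 0) hS (adj_mul_inv adj_mul_p) (by simp)
  induction w using FreeGroup.induction_on with
  | C1 => exact ⟨0, 1, 0, by simp; rfl, traversable_one hS⟩
  | of i =>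
    fin_cases i
    · exact ⟨1, t⁻¹, -1, by simp, ht'⟩
    · exact ⟨0 + 1, p * t⁻¹, -1, by simp [w₀], hp.mul ht'⟩
  | inv_of i _ =>
    fin_cases i
    · exact ⟨0, t, 1, by simp, ht⟩
    · exact ⟨0 + 0, t * p⁻¹, 1, by simp [w₀], ht.mul hp'⟩
  | mul w₁ w₂ ih₁ ih₂ =>
    obtain ⟨r₁, g₁, j₁, hg₁, h₁⟩ := ih₁
    obtain ⟨r₂, g₂, j₂, hg₂, h₂⟩ := ih₂
    refine ⟨r₁ + r₂, g₁ * g₂, j₁ + j₂, ?_, h₁.mul h₂⟩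
    simp [hg₁, hg₂, zpow_add]

lemma exists_traversable_snd (hS : ∀ s ∈ S, toAdd (fstHeight s) ≤ N) (w : F2) :
    ∃ (r : ℕ) (g : K), (g : F2 × F2).2 = w ∧
      Traversable (mulCayley gens) S fstHeight N r g := by
  have hq := traversable_of_adj (r := 0) hS adj_mul_q (by simp)
  have ht := traversable_of_adj (r := 0) hS adj_mul_t (by simp)
  have ht' := traversable_of_adj (r := 1) hS (adj_mul_inv adj_mul_t) (by simp)
  have hq' := traversable_of_adj (r := 0) hS (adj_mul_inv adj_mul_q) (by simp)
  induction w using FreeGroup.induction_on with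
  | C1 => exact ⟨0, 1, by simp, traversable_one hS⟩
  | of i =>
    fin_cases i
    · exact ⟨0 + 0, q⁻¹ * t, by simp [w₀], hq'.mul ht⟩
    · exact ⟨0, t, by simp, ht⟩
  | inv_of i _ =>
    fin_cases i
    · exact ⟨1 + 0, t⁻¹ * q, by simp [w₀], ht'.mul hq⟩
    · exact ⟨1, t⁻¹, by simp, ht'⟩
  | mul w₁ w₂ ih₁ ih₂ =>
    obtain ⟨r₁, g₁, hg₁, h₁⟩ := ih₁
    obtain ⟨r₂, g₂, hg₂, h₂⟩ := ih₂
    exact ⟨r₁ + r₂, g₁ * g₂, by simp [hg₁, hg₂], h₁.mul h₂⟩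

end Transport

section Reach

variable {S : Set K} {N : ℕ} (hS₁ : ∀ s ∈ S, toAdd (fstHeight s) ≤ N)
  (hS₂ : ∀ s ∈ S, toAdd (sndHeight s) ≤ N)
include hS₁

lemma exists_reachableAvoiding_snd_eq_one {x : K}
    (hx : ∀ s ∈ S, (s : F2 × F2).2 ≠ (x : F2 × F2).2) :
    ∃ y, (mulCayley gens).ReachableAvoiding S x y ∧ (y : F2 × F2).2 = 1 ∧
      (N : ℤ) < toAdd (fstHeight y) := by
  obtain ⟨r, g, hg, hgT⟩ := exists_traversable_snd hS₁ (x : F2 × F2).2⁻¹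
  obtain ⟨n, hn⟩ : ∃ n : ℕ, N + r < toAdd (fstHeight x) + 2 * n :=
    ⟨(N + r - toAdd (fstHeight x)).toNat + 1, by omega⟩
  have hpump := reachableAvoiding_mul_zpow (S := S) (x := x) adj_mul_p
    (fun k hk => hx _ hk (by simp)) n
  have hσ := hgT.1
  refine ⟨x * p ^ (n : ℤ) * g, hpump.trans (hgT.2 _ ?_), by simp [hg], ?_⟩ <;>
    simp <;> omega

include hS₂

lemma exists_reachableAvoiding_q_pow {y : K} (hy₂ : (y : F2 × F2).2 = 1)
    (hy : (N : ℤ) < toAdd (fstHeight y)) :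
    ∃ m : ℕ, (N : ℤ) < 2 * m ∧ (mulCayley gens).ReachableAvoiding S y (q ^ m) := by
  obtain ⟨r, g, j, hg, hgT⟩ := exists_traversable_fst hS₂ (y : F2 × F2).1⁻¹
  obtain ⟨m, hm⟩ : ∃ m : ℕ, N + r < 2 * m := ⟨N + r + 1, by omega⟩
  have hpump := reachableAvoiding_mul_zpow adj_mul_q
    (fun k => notMem_of_forall_le_of_lt hS₁ (by simpa using hy)) m
  have htrav := hgT.2 (y * q ^ (m : ℤ)) (by simp [sndHeight_apply y, hy₂]; omega)
  have hj : j = 0 := by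
    have hy' : expSum (y : F2 × F2).1 = 1 := by simpa [hy₂] using expSum_fst_mul_snd y
    have hg' : expSum (y : F2 × F2).1⁻¹ * expSum (of 1 ^ j) = 1 := by
      simpa [hg] using expSum_fst_mul_snd g
    rw [_root_.map_inv, hy', inv_one, one_mul] at hg'
    simpa [expSum] using hg'
  refine ⟨m, by omega, ?_⟩
  convert hpump.trans htrav using 1
  ext <;> simp [hg, hy₂, hj]

lemma reachableAvoiding_q_pow_pq_pow {m : ℕ} (hm : (N : ℤ) < 2 * m) :
    (mulCayley gens).ReachableAvoiding S (q ^ m) ((p * q) ^ (N + 1)) := by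
  have h₁ := reachableAvoiding_mul_zpow (x := q ^ m) adj_mul_p
    (fun k => notMem_of_forall_le_of_lt hS₂ (by simp; omega)) (N + 1)
  have h₂ := reachableAvoiding_mul_zpow (x := q ^ m * p ^ (N + 1 : ℤ)) adj_mul_q
    (fun k => notMem_of_forall_le_of_lt hS₁ (by simp; omega)) (N + 1 - m)
  convert h₁.trans h₂ using 1
  ext <;> simp [← zpow_natCast, ← zpow_add]

theorem reachableAvoiding_pq_pow {x : K}
    (hx : (∀ s ∈ S, (s : F2 × F2).1 ≠ (x : F2 × F2).1) ∨
      (∀ s ∈ S, (s : F2 × F2).2 ≠ (x : F2 × F2).2)) :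
    (mulCayley gens).ReachableAvoiding S x ((p * q) ^ (N + 1)) := by
  have of_snd : ∀ x : K, (∀ s ∈ S, (s : F2 × F2).2 ≠ (x : F2 × F2).2) →
      (mulCayley gens).ReachableAvoiding S x ((p * q) ^ (N + 1)) := fun x hx => by
    obtain ⟨y, hxy, hy₂, hy⟩ := exists_reachableAvoiding_snd_eq_one hS₁ hx
    obtain ⟨m, hm, hym⟩ := exists_reachableAvoiding_q_pow hS₁ hS₂ hy₂ hy
    exact hxy.trans (hym.trans (reachableAvoiding_q_pow_pq_pow hS₁ hS₂ hm))
  rcases hx with hx | hx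
  · obtain ⟨n, hn⟩ : ∃ n : ℕ, N < toAdd (sndHeight x) + 2 * n :=
      ⟨(N - toAdd (sndHeight x)).toNat + 1, by omega⟩
    refine (reachableAvoiding_mul_zpow adj_mul_q (fun k hk => hx _ hk (by simp)) n).trans
      (of_snd _ fun s hs hsx => (hS₂ s hs).not_gt ?_)
    simp [sndHeight_apply s, hsx, ← sndHeight_apply]; omega
  · exact of_snd x hx

end Reach

lemma exists_height_bound (S : Finset K) :
    ∃ N : ℕ, ∀ s ∈ S, toAdd (fstHeight s) ≤ N ∧ toAdd (sndHeight s) ≤ N := by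
  obtain ⟨N, hN⟩ :=
    (S.image fun s => max (toAdd (fstHeight s)) (toAdd (sndHeight s))).exists_le
  exact ⟨N.toNat, fun s hs => by have := hN _ (Finset.mem_image_of_mem _ hs); omega⟩

lemma componentCompl_eq_of_infinite {S : Finset K} {C D : (mulCayley gens).ComponentCompl S}
    (hC : C.supp.Infinite) (hD : D.supp.Infinite) : C = D := by
  obtain ⟨N, hN⟩ := exists_height_bound S
  have hS₁ s hs := (hN s hs).1
  have hS₂ s hs := (hN s hs).2
  have hfin : {x : K | (∃ s ∈ S, (s : F2 × F2).1 = (x : F2 × F2).1) ∧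
      ∃ s ∈ S, (s : F2 × F2).2 = (x : F2 × F2).2}.Finite := by
    exact (((S.finite_toSet.image _).prod (S.finite_toSet.image _)).preimage
      Subtype.val_injective.injOn).subset fun x ⟨h₁, h₂⟩ => ⟨h₁, h₂⟩
  have htarget : (p * q) ^ (N + 1) ∉ (S : Set K) :=
    notMem_of_forall_le_of_lt hS₁ (by simp; omega)
  have key (E : (mulCayley gens).ComponentCompl S) (hE : E.supp.Infinite) :
      E = (mulCayley gens).componentComplMk htarget := by
    obtain ⟨x, hxE, hx⟩ := hE.exists_notMem_finite hfin
    obtain ⟨hxS, rfl⟩ := ComponentCompl.mem_supp_iff.mp hxE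
    refine (reachableAvoiding_pq_pow hS₁ hS₂ ?_).componentComplMk_eq hxS htarget
    exact (not_and_or.mp hx).imp (fun h s hs hsx => h ⟨s, hs, hsx⟩)
      (fun h s hs hsx => h ⟨s, hs, hsx⟩)
  rw [key C hC, key D hD]

lemma preconnected_mulCayley_gens : (mulCayley gens).Preconnected := by
  have h (x : K) := (reachableAvoiding_pq_pow (S := ∅) (N := 0) (by simp) (by simp)
    (x := x) (.inl (by simp))).reachable
  exact fun x y => (h x).trans (h y).symm

instance : Infinite K :=
  Infinite.of_injective (t ^ · : ℤ → K) fun k l h => by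
    simpa using congrArg (toAdd ∘ sndHeight) h

end ExpSumKernel

open SimpleGraph ExpSumKernel

/-- `K = ker φ` is one-ended: the Cayley graph of `K` with respect to
`T = {ba⁻¹, dc⁻¹, da⁻¹}` has a nonempty space of ends, and any two ends coincide. -/
theorem stmt_10 (φ : F2 × F2 →* Multiplicative ℤ)
    (ha : φ a = Multiplicative.ofAdd 1) (hb : φ b = Multiplicative.ofAdd 1)
    (hc : φ c = Multiplicative.ofAdd 1) (hd : φ d = Multiplicative.ofAdd 1) :
    Nonempty (cayleyK φ).end ∧ ∀ e₁ e₂ : (cayleyK φ).end, e₁ = e₂ := by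
  obtain rfl := eq_totalExpSum ha hb hc hd
  rw [cayleyK_totalExpSum]
  have : (mulCayley gens).LocallyFinite := fun x =>
    (finite_neighborSet_mulCayley finite_gens x).fintype
  have : Fact (mulCayley gens).Preconnected := ⟨preconnected_mulCayley_gens⟩
  refine ⟨(mulCayley gens).nonempty_ends_of_infinite.to_subtype,
    fun e₁ e₂ => Subtype.ext (funext fun L => ?_)⟩
  exact componentCompl_eq_of_infinite (end_componentCompl_infinite _ e₁ L)
    (end_componentCompl_infinite _ e₂ L)
end

section
/- Stallings' group S, i.e., the presented group ⟨a,b,c,d,s | [a,c], [a,d], [b,c], [b,d], (a⁻¹sa)(b⁻¹sb)⁻¹, (a⁻¹sa)(c⁻¹sc)⁻¹, (a⁻¹sa)(d⁻¹sd)⁻¹⟩, is isomorphic to the HNN extension of the group F = F(a,b) × F(c,d) over the subgroup K = ker φ with associated isomorphism the identity map of K (so the stable letter commutes with every element of K). -/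
/-- The free group on the five generators `a, b, c, d, s`. -/
abbrev F5 : Type := FreeGroup (Fin 5)

open scoped commutatorElement

/-- Relators of Stallings' group: `[a,c], [a,d], [b,c], [b,d]`,
`(a⁻¹sa)(b⁻¹sb)⁻¹, (a⁻¹sa)(c⁻¹sc)⁻¹, (a⁻¹sa)(d⁻¹sd)⁻¹`, where `a, b, c, d, s` are the
generators `0, 1, 2, 3, 4` respectively. -/
def stallingsRels : Set F5 :=
  {⁅FreeGroup.of (0:Fin 5), FreeGroup.of 2⁆, ⁅FreeGroup.of (0:Fin 5), FreeGroup.of 3⁆,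
    ⁅FreeGroup.of (1:Fin 5), FreeGroup.of 2⁆, ⁅FreeGroup.of (1:Fin 5), FreeGroup.of 3⁆,
    ((FreeGroup.of 0)⁻¹ * FreeGroup.of 4 * FreeGroup.of 0) *
      ((FreeGroup.of 1)⁻¹ * FreeGroup.of 4 * FreeGroup.of 1)⁻¹,
    ((FreeGroup.of 0)⁻¹ * FreeGroup.of 4 * FreeGroup.of 0) *
      ((FreeGroup.of 2)⁻¹ * FreeGroup.of 4 * FreeGroup.of 2)⁻¹,
    ((FreeGroup.of 0)⁻¹ * FreeGroup.of 4 * FreeGroup.of 0) *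
      ((FreeGroup.of 3)⁻¹ * FreeGroup.of 4 * FreeGroup.of 3)⁻¹}

/-!
The two homomorphisms `a, b, c, d, s ↦ a, b, c, d, t` and back are checked on generators; the
relators `(a⁻¹sa)(x⁻¹sx)⁻¹` say exactly that `s` commutes with `ax⁻¹`. The only real point is
that `s` must commute with all of `K = ker φ`, i.e. that `ab⁻¹, ac⁻¹, ad⁻¹` generate `K`.
This holds because `u ↦ (u, c^{-φ u})` and `v ↦ (a^{-φ v}, v)` are homomorphisms `F₂ → F`
sending the free generators to words in `ab⁻¹, ac⁻¹, ad⁻¹`, and every `(u, v) ∈ K` factors as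
`(u, c^{-φ u}) (ac⁻¹)^{φ v} (a^{-φ v}, v)`.
-/

section ProdKernel

variable {G₁ G₂ : Type*} [Group G₁] [Group G₂]

def inlBalance (φ : G₁ × G₂ →* Multiplicative ℤ) (e : G₂) : G₁ →* G₁ × G₂ :=
  (MonoidHom.id G₁).prod ((zpowersHom G₂ e⁻¹).comp (φ.comp (MonoidHom.inl G₁ G₂)))

def inrBalance (φ : G₁ × G₂ →* Multiplicative ℤ) (e : G₁) : G₂ →* G₁ × G₂ :=
  ((zpowersHom G₁ e⁻¹).comp (φ.comp (MonoidHom.inr G₁ G₂))).prod (MonoidHom.id G₂)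

@[simp]
lemma inlBalance_apply (φ : G₁ × G₂ →* Multiplicative ℤ) (e : G₂) (u : G₁) :
    inlBalance φ e u = (u, e⁻¹ ^ (φ (u, 1)).toAdd) := rfl

@[simp]
lemma inrBalance_apply (φ : G₁ × G₂ →* Multiplicative ℤ) (e : G₁) (v : G₂) :
    inrBalance φ e v = (e⁻¹ ^ (φ (1, v)).toAdd, v) := rfl

lemma ker_le_of_balance_range_le {φ : G₁ × G₂ →* Multiplicative ℤ} {H : Subgroup (G₁ × G₂)}
    {e₁ : G₁} {e₂ : G₂} (he₁ : φ (e₁, 1) = Multiplicative.ofAdd 1)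
    (h₁ : (inlBalance φ e₂).range ≤ H) (h₂ : (inrBalance φ e₁).range ≤ H) : φ.ker ≤ H := by
  rintro ⟨u, v⟩ huv
  set n := (φ (1, v)).toAdd
  have hu : (φ (u, 1)).toAdd = -n := by
    have : φ (u, 1) * φ (1, v) = 1 := by
      rw [← map_mul, Prod.mk_mul_mk, mul_one, one_mul]; exact huv
    simpa [eq_neg_iff_add_eq_zero, n] using congrArg Multiplicative.toAdd this
  have hdiag : inlBalance φ e₂ e₁ ^ n ∈ H := zpow_mem (h₁ ⟨e₁, rfl⟩) n
  have hprod := mul_mem (mul_mem (h₁ ⟨u, rfl⟩) hdiag) (h₂ ⟨v, rfl⟩)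
  convert hprod using 1
  simp [hu, he₁, n]

end ProdKernel

lemma FreeGroup.range_le_of_forall_of_mem {α G : Type*} [Group G] {f : FreeGroup α →* G}
    {H : Subgroup G} (h : ∀ i, f (FreeGroup.of i) ∈ H) : f.range ≤ H := by
  rw [MonoidHom.range_eq_map, ← FreeGroup.closure_range_of, MonoidHom.map_closure,
    Subgroup.closure_le, ← Set.range_comp, Set.range_subset_iff]
  exact h

lemma inv_mul_mul_eq_inv_mul_mul_iff_commute {G : Type*} [Group G] {t x y : G} :
    x⁻¹ * t * x = y⁻¹ * t * y ↔ Commute t (x * y⁻¹) := by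
  constructor <;> intro h
  · calc t * (x * y⁻¹) = x * (x⁻¹ * t * x) * y⁻¹ := by group
      _ = x * (y⁻¹ * t * y) * y⁻¹ := by rw [h]
      _ = x * y⁻¹ * t := by group
  · calc x⁻¹ * t * x = x⁻¹ * (t * (x * y⁻¹)) * y := by group
      _ = x⁻¹ * (x * y⁻¹ * t) * y := by rw [h.eq]
      _ = y⁻¹ * t * y := by group

@[ext]
lemma MonoidHom.prod_ext {M N P : Type*} [MulOneClass M] [MulOneClass N] [Monoid P]
    {f g : M × N →* P} (hl : f.comp (MonoidHom.inl M N) = g.comp (MonoidHom.inl M N))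
    (hr : f.comp (MonoidHom.inr M N) = g.comp (MonoidHom.inr M N)) : f = g := by
  rw [← MonoidHom.noncommCoprod_unique f, ← MonoidHom.noncommCoprod_unique g]
  congr

lemma FreeGroup.commute_lift_lift {α β G : Type*} [Group G] {f : α → G} {g : β → G}
    (h : ∀ i j, Commute (f i) (g j)) (u : FreeGroup α) (v : FreeGroup β) :
    Commute (FreeGroup.lift f u) (FreeGroup.lift g v) := by
  induction u using FreeGroup.induction_on with
  | C1 => simp
  | of i =>
    induction v using FreeGroup.induction_on with
    | C1 => simp
    | of j => simpa using h i j
    | inv_of j hj => rw [_root_.map_inv]; exact hj.inv_right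
    | mul v w hv hw => rw [_root_.map_mul]; exact hv.mul_right hw
  | inv_of i hi => rw [_root_.map_inv]; exact hi.inv_left
  | mul u w hu hw => rw [_root_.map_mul]; exact hu.mul_left hw

lemma HNNExtension.commute_t_of {G : Type*} [Group G] {H : Subgroup G} {g : G} (hg : g ∈ H) :
    Commute (HNNExtension.t : HNNExtension G H H (MulEquiv.refl H)) (HNNExtension.of g) :=
  HNNExtension.t_mul_of (φ := MulEquiv.refl H) ⟨g, hg⟩

namespace PresentedGroup

variable {α : Type*} {rels : Set (FreeGroup α)}

lemma commute_of_commutatorElement_mem {i j : α}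
    (h : ⁅FreeGroup.of i, FreeGroup.of j⁆ ∈ rels) :
    Commute (of i : PresentedGroup rels) (of j) := by
  have := one_of_mem h
  rwa [map_commutatorElement, commutatorElement_eq_one_iff_commute] at this

lemma commute_of_conj_relator_mem {i j k : α}
    (h : ((FreeGroup.of i)⁻¹ * FreeGroup.of k * FreeGroup.of i) *
      ((FreeGroup.of j)⁻¹ * FreeGroup.of k * FreeGroup.of j)⁻¹ ∈ rels) :
    Commute (of k : PresentedGroup rels) (of i * (of j)⁻¹) := by
  have := mk_eq_mk_of_mul_inv_mem h
  simp only [map_mul, map_inv] at this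
  exact inv_mul_mul_eq_inv_mul_mul_iff_commute.1 this

end PresentedGroup

namespace Stallings

lemma ker_le_of_mul_inv_mem {φ : F2 × F2 →* Multiplicative ℤ}
    (ha : φ a = Multiplicative.ofAdd 1) (hb : φ b = Multiplicative.ofAdd 1)
    (hc : φ c = Multiplicative.ofAdd 1) (hd : φ d = Multiplicative.ofAdd 1)
    {H : Subgroup (F2 × F2)} (hab : a * b⁻¹ ∈ H) (hac : a * c⁻¹ ∈ H) (had : a * d⁻¹ ∈ H) :
    φ.ker ≤ H := by
  refine ker_le_of_balance_range_le (e₁ := FreeGroup.of 0) (e₂ := FreeGroup.of 0) ha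
    (FreeGroup.range_le_of_forall_of_mem fun i => ?_)
    (FreeGroup.range_le_of_forall_of_mem fun i => ?_) <;> fin_cases i
  · convert hac using 1
    simp [show φ (FreeGroup.of 0, 1) = _ from ha, a, c]
  · convert mul_mem (inv_mem hab) hac using 1
    simp [show φ (FreeGroup.of 1, 1) = _ from hb, a, b, c]
  · convert inv_mem hac using 1
    simp [show φ (1, FreeGroup.of 0) = _ from hc, a, c]
  · convert inv_mem had using 1
    simp [show φ (1, FreeGroup.of 1) = _ from hd, a, d]

abbrev gen (i : Fin 5) : PresentedGroup stallingsRels := PresentedGroup.of i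

lemma lift_eq_one_of_mem {G : Type*} [Group G] {f : Fin 5 → G}
    (h02 : Commute (f 0) (f 2)) (h03 : Commute (f 0) (f 3))
    (h12 : Commute (f 1) (f 2)) (h13 : Commute (f 1) (f 3))
    (h1 : Commute (f 4) (f 0 * (f 1)⁻¹)) (h2 : Commute (f 4) (f 0 * (f 2)⁻¹))
    (h3 : Commute (f 4) (f 0 * (f 3)⁻¹)) :
    ∀ r ∈ stallingsRels, FreeGroup.lift f r = 1 := by
  intro r hr
  simp only [stallingsRels, Set.mem_insert_iff, Set.mem_singleton_iff] at hr
  rcases hr with rfl | rfl | rfl | rfl | rfl | rfl | rfl <;>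
    simp only [map_commutatorElement, map_mul, map_inv, FreeGroup.lift_apply_of,
      commutatorElement_eq_one_iff_commute, mul_inv_eq_one,
      inv_mul_mul_eq_inv_mul_mul_iff_commute] <;>
    assumption

def ofProd : F2 × F2 →* PresentedGroup stallingsRels :=
  (FreeGroup.lift ![gen 0, gen 1]).noncommCoprod (FreeGroup.lift ![gen 2, gen 3])
    (FreeGroup.commute_lift_lift fun i j => by
      fin_cases i <;> fin_cases j <;>
        exact PresentedGroup.commute_of_commutatorElement_mem (by simp [stallingsRels]))

@[simp] lemma ofProd_a : ofProd a = gen 0 := by simp [ofProd, a]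
@[simp] lemma ofProd_b : ofProd b = gen 1 := by simp [ofProd, b]
@[simp] lemma ofProd_c : ofProd c = gen 2 := by simp [ofProd, c]
@[simp] lemma ofProd_d : ofProd d = gen 3 := by simp [ofProd, d]

lemma commute_gen_ofProd_of_mem_ker {φ : F2 × F2 →* Multiplicative ℤ}
    (ha : φ a = Multiplicative.ofAdd 1) (hb : φ b = Multiplicative.ofAdd 1)
    (hc : φ c = Multiplicative.ofAdd 1) (hd : φ d = Multiplicative.ofAdd 1)
    {g : F2 × F2} (hg : g ∈ φ.ker) : Commute (gen 4) (ofProd g) := by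
  have hK := ker_le_of_mul_inv_mem (H := (Subgroup.centralizer {gen 4}).comap ofProd)
    ha hb hc hd ?_ ?_ ?_ hg
  · exact (Subgroup.mem_centralizer_singleton_iff.1 hK).symm
  all_goals
    simp only [Subgroup.mem_comap, Subgroup.mem_centralizer_singleton_iff, map_mul, map_inv,
      ofProd_a, ofProd_b, ofProd_c, ofProd_d]
    exact (PresentedGroup.commute_of_conj_relator_mem (by simp [stallingsRels])).eq.symm

variable (φ : F2 × F2 →* Multiplicative ℤ)
    (ha : φ a = Multiplicative.ofAdd 1) (hb : φ b = Multiplicative.ofAdd 1)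
    (hc : φ c = Multiplicative.ofAdd 1) (hd : φ d = Multiplicative.ofAdd 1)

def toHNN :
    PresentedGroup stallingsRels →* HNNExtension (F2 × F2) φ.ker φ.ker (MulEquiv.refl φ.ker) :=
  PresentedGroup.toGroup (f := ![.of a, .of b, .of c, .of d, .t]) <| by
    refine lift_eq_one_of_mem ((MonoidHom.commute_inl_inr _ _).map _)
      ((MonoidHom.commute_inl_inr _ _).map _) ((MonoidHom.commute_inl_inr _ _).map _)
      ((MonoidHom.commute_inl_inr _ _).map _) ?_ ?_ ?_ <;>
    · simp only [Matrix.cons_val, ← map_inv, ← map_mul]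
      exact HNNExtension.commute_t_of (by simp [ha, hb, hc, hd])

def ofHNN :
    HNNExtension (F2 × F2) φ.ker φ.ker (MulEquiv.refl φ.ker) →* PresentedGroup stallingsRels :=
  HNNExtension.lift ofProd (gen 4) fun k => (commute_gen_ofProd_of_mem_ker ha hb hc hd k.2).eq

@[simp]
lemma ofHNN_of (g : F2 × F2) : ofHNN φ ha hb hc hd (.of g) = ofProd g :=
  HNNExtension.lift_of _ _ _ _

@[simp]
lemma ofHNN_t : ofHNN φ ha hb hc hd .t = gen 4 :=
  HNNExtension.lift_t _ _ _

def equivHNN :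
    PresentedGroup stallingsRels ≃* HNNExtension (F2 × F2) φ.ker φ.ker (MulEquiv.refl φ.ker) :=
  (toHNN φ ha hb hc hd).toMulEquiv (ofHNN φ ha hb hc hd)
    (by ext i; fin_cases i <;> simp [toHNN])
    (by
      ext i <;> try fin_cases i
      all_goals simp [toHNN, ofProd, a, b, c, d])

end Stallings

open Stallings in
/-- Stallings' group, as presented by Gersten, is isomorphic to the HNN extension of
`F = F(a,b) × F(c,d)` over `K = ker φ` with associated isomorphism the identity of `K`. -/
theorem stmt_13 (φ : F2 × F2 →* Multiplicative ℤ)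
    (ha : φ a = Multiplicative.ofAdd 1) (hb : φ b = Multiplicative.ofAdd 1)
    (hc : φ c = Multiplicative.ofAdd 1) (hd : φ d = Multiplicative.ofAdd 1) :
    Nonempty
      (PresentedGroup stallingsRels ≃*
        HNNExtension (F2 × F2) φ.ker φ.ker (MulEquiv.refl φ.ker)) :=
  ⟨equivHNN φ ha hb hc hd⟩
end

section
/- Let n ≥ 3, let Gₙ = F₂ × ⋯ (n) ⋯ × F₂ and let Bₙ ≤ Gₙ be the kernel of the homomorphism Gₙ → ℤ sending every generator to 1. Then the restriction to Bₙ of the projection of Gₙ onto its last factor is a surjective homomorphism Bₙ → F₂ whose kernel is isomorphic to Bₙ₋₁; in particular there is a short exact sequence 1 → Bₙ₋₁ → Bₙ → F₂ → 1. -/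
/-!
Write `χ : F₂ → ℤ` for the exponent sum. Every homomorphism `Gₙ → ℤ` taking the value `1` on all
free generators is `g ↦ ∑ᵢ χ(gᵢ)`. Surjectivity of the last projection on `Bₙ`: an arbitrary last
coordinate `w` is balanced by `a^{-χ(w)}` in the first coordinate. An element of `Bₙ` with trivial
last coordinate is the same as an element of `Bₙ₋₁`, extended by `1`.
-/

namespace MonoidHom

variable {ι G M : Type*} [Fintype ι]

section Monoid

variable [Monoid G] [CommMonoid M]

def coordProd (χ : G →* M) : (ι → G) →* M :=
  ∏ i, χ.comp (Pi.evalMonoidHom (fun _ => G) i)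

lemma coordProd_apply (χ : G →* M) (g : ι → G) : coordProd χ g = ∏ i, χ (g i) := by
  simp only [coordProd, finsetProd_apply, comp_apply, Pi.evalMonoidHom_apply]

lemma coordProd_mulSingle [DecidableEq ι] (χ : G →* M) (i : ι) (x : G) :
    coordProd χ (Pi.mulSingle i x) = χ x := by
  rw [coordProd_apply, Fintype.prod_eq_single i fun j hj => by
    rw [Pi.mulSingle_eq_of_ne hj, map_one], Pi.mulSingle_eq_same]

lemma eq_coordProd_of_mulSingle [DecidableEq ι] {ψ : (ι → G) →* M} {χ : G →* M}
    (h : ∀ i x, ψ (Pi.mulSingle i x) = χ x) : ψ = coordProd χ :=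
  pi_ext fun i x => by rw [h, coordProd_mulSingle]

lemma coordProd_eq_init_mul_last (χ : G →* M) {m : ℕ} (g : Fin (m + 1) → G) :
    coordProd χ g = coordProd χ (Fin.init g) * χ (g (Fin.last m)) := by
  simp only [coordProd_apply, Fin.prod_univ_castSucc, Fin.init]

end Monoid

variable [Group G] [CommGroup M]

lemma surjective_eval_comp_ker_coordProd_subtype [DecidableEq ι] {χ : G →* M}
    (hχ : Function.Surjective χ) {i k : ι} (hik : i ≠ k) :
    Function.Surjective ((Pi.evalMonoidHom (fun _ => G) i).comp (coordProd χ).ker.subtype) := by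
  intro w
  obtain ⟨c, hc⟩ := hχ (χ w)
  let g : ι → G := Pi.mulSingle i w * Pi.mulSingle k c⁻¹
  have hg : g ∈ (coordProd χ).ker := by
    rw [mem_ker, map_mul, coordProd_mulSingle, coordProd_mulSingle, map_inv, hc, mul_inv_cancel]
  refine ⟨⟨g, hg⟩, ?_⟩
  simp [g, Pi.mulSingle_eq_of_ne hik]

def kerEvalLastEquiv (χ : G →* M) (m : ℕ) :
    ((Pi.evalMonoidHom (fun _ : Fin (m + 1) => G) (Fin.last m)).comp
        (coordProd χ).ker.subtype).ker ≃* (coordProd χ : (Fin m → G) →* M).ker where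
  toFun x := ⟨Fin.init x.1.1, by
    have hx := x.1.2
    rw [mem_ker, coordProd_eq_init_mul_last, show x.1.1 (Fin.last m) = 1 from x.2, map_one,
      mul_one] at hx
    exact hx⟩
  invFun y := ⟨⟨Fin.snoc y.1 1, by
    rw [mem_ker, coordProd_eq_init_mul_last, Fin.init_snoc, Fin.snoc_last, map_one, mul_one]
    exact y.2⟩, Fin.snoc_last (α := fun _ => G) _ _⟩
  left_inv x := by
    ext1; ext1
    change Fin.snoc (Fin.init x.1.1) 1 = x.1.1
    rw [← show x.1.1 (Fin.last m) = 1 from x.2, Fin.snoc_init_self]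
  right_inv y := Subtype.ext (Fin.init_snoc (α := fun _ => G) _ _)
  map_mul' _ _ := rfl

end MonoidHom

namespace FreeGroup

variable {α : Type*}

def exponentSum : FreeGroup α →* Multiplicative ℤ :=
  lift fun _ => Multiplicative.ofAdd 1

lemma exponentSum_of (a : α) : exponentSum (of a) = Multiplicative.ofAdd 1 :=
  lift_apply_of

lemma exponentSum_surjective [Nonempty α] :
    Function.Surjective (exponentSum : FreeGroup α →* Multiplicative ℤ) := by
  intro z
  obtain ⟨a⟩ := ‹Nonempty α›
  refine ⟨of a ^ z.toAdd, ?_⟩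
  rw [map_zpow, exponentSum_of, ← ofAdd_zsmul, smul_eq_mul, mul_one, ofAdd_toAdd]

lemma eq_coordProd_exponentSum {ι : Type*} [Fintype ι] [DecidableEq ι]
    {ψ : (ι → FreeGroup α) →* Multiplicative ℤ}
    (hψ : ∀ i a, ψ (Pi.mulSingle i (of a)) = Multiplicative.ofAdd 1) :
    ψ = MonoidHom.coordProd exponentSum :=
  MonoidHom.eq_coordProd_of_mulSingle fun i => DFunLike.congr_fun <|
    ext_hom (ψ.comp (MonoidHom.mulSingle (fun _ => FreeGroup α) i)) exponentSum fun a =>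
      (hψ i a).trans (exponentSum_of a).symm

end FreeGroup

/-- For `n ≥ 3`, with `Gₙ = F₂ × ⋯ (n) ⋯ × F₂` and `Bₙ = ker ψₙ` (resp. `Bₙ₋₁ = ker ψₙ₋₁`)
the kernel of the homomorphism sending every free generator of every factor to `1 ∈ ℤ`,
the restriction to `Bₙ` of the projection of `Gₙ` onto its last factor is a surjective
homomorphism `Bₙ → F₂` whose kernel is isomorphic to `Bₙ₋₁`. -/
theorem stmt_15 (n : ℕ) (hn : 3 ≤ n)
    (ψn : ((i : Fin n) → FreeGroup (Fin 2)) →* Multiplicative ℤ)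
    (hψn : ∀ (i : Fin n) (j : Fin 2),
      ψn (Pi.mulSingle i (FreeGroup.of j)) = Multiplicative.ofAdd 1)
    (ψm : ((i : Fin (n - 1)) → FreeGroup (Fin 2)) →* Multiplicative ℤ)
    (hψm : ∀ (i : Fin (n - 1)) (j : Fin 2),
      ψm (Pi.mulSingle i (FreeGroup.of j)) = Multiplicative.ofAdd 1) :
    Function.Surjective
      ((Pi.evalMonoidHom (fun _ : Fin n => FreeGroup (Fin 2)) ⟨n - 1, by omega⟩).comp
        ψn.ker.subtype) ∧
    Nonempty
      (((Pi.evalMonoidHom (fun _ : Fin n => FreeGroup (Fin 2)) ⟨n - 1, by omega⟩).comp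
          ψn.ker.subtype).ker ≃* ψm.ker) := by
  obtain ⟨m, rfl⟩ : ∃ m, n = m + 1 := ⟨n - 1, by omega⟩
  obtain rfl := FreeGroup.eq_coordProd_exponentSum hψn
  obtain rfl := FreeGroup.eq_coordProd_exponentSum hψm
  have hlast : Fin.last m ≠ 0 := by rw [Ne, Fin.ext_iff, Fin.val_last, Fin.val_zero]; omega
  exact ⟨MonoidHom.surjective_eval_comp_ker_coordProd_subtype
      FreeGroup.exponentSum_surjective hlast,
    ⟨MonoidHom.kerEvalLastEquiv FreeGroup.exponentSum m⟩⟩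
end
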